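/- arXiv:1212.3026 — 3 statements merged into one kernel-verified Lean document; each statement's English description precedes it below -/
import Mathlib

section
/- For 0 < δ < 1 and any integer shifts, the translated flat-top functions x ↦ ψ_δ(x - 2k), k ∈ ℤ, form a partition of unity on ℝ: for every x ∈ ℝ, the sum over k ∈ ℤ of ψ_δ(x - 2k) equals 1 (with at most two nonzero terms). -/
/-!
Write `x = y + 2m` with `y ∈ [-1-δ, 1-δ)`. Since `ψ_δ` is supported in `[-1-δ, 1+δ]` and
`1 + δ < 3 - δ`, only the translates with `k = m` and `k = m - 1` can be nonzero, and their sum is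
`ψ_δ(y) + ψ_δ(y + 2)`. On the flat part this is `1 + 0`; on the ramp `y < -1 + δ` it is
`φ^L(t) + φ^R(t + 1)`, and `(1 + t)²(1 - 2t) + t²(3 + 2t) = 1` identically.
-/

open Set

section IntegerTranslates

variable {f : ℝ → ℝ} {p c : ℝ}

lemma eq_zero_or_eq_one_of_add_mul_mem_Ioo (hp : 0 < p) {y : ℝ} (hy : y ∈ Ico c (c + p))
    {n : ℤ} (hn : y + p * n ∈ Ioo c (c + 2 * p)) : n = 0 ∨ n = 1 := by
  have hlo : (-1 : ℝ) < n := lt_of_mul_lt_mul_left (a := p) (by linarith [hy.2, hn.1]) hp.le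
  have hhi : (n : ℝ) < 2 := lt_of_mul_lt_mul_left (a := p) (by linarith [hy.1, hn.2]) hp.le
  have : -1 < n := by exact_mod_cast hlo
  have : n < 2 := by exact_mod_cast hhi
  omega

lemma setOf_translate_ne_zero_subset_pair (hp : 0 < p)
    (hsupp : ∀ y ∉ Ioo c (c + 2 * p), f y = 0) (x : ℝ) :
    {k : ℤ | f (x - p * k) ≠ 0} ⊆ {toIcoDiv hp c x - 1, toIcoDiv hp c x} := by
  set m := toIcoDiv hp c x
  have hy : x - m * p ∈ Ico c (c + p) := by
    simpa only [zsmul_eq_mul] using sub_toIcoDiv_zsmul_mem_Ico hp c x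
  intro k hk
  have hshift : x - p * k = x - m * p + p * ((m - k : ℤ) : ℝ) := by push_cast; ring
  have hmem : x - m * p + p * ((m - k : ℤ) : ℝ) ∈ Ioo c (c + 2 * p) := by
    by_contra h
    exact hk (hshift ▸ hsupp _ h)
  have := eq_zero_or_eq_one_of_add_mul_mem_Ioo hp hy hmem
  rw [mem_insert_iff, mem_singleton_iff]
  omega

theorem tsum_translate_eq_one (hp : 0 < p) (hsupp : ∀ y ∉ Ioo c (c + 2 * p), f y = 0)
    (hpair : ∀ y ∈ Ico c (c + p), f y + f (y + p) = 1) (x : ℝ) :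
    ∑' k : ℤ, f (x - p * k) = 1 := by
  set m := toIcoDiv hp c x
  have hy : x - m * p ∈ Ico c (c + p) := by
    simpa only [zsmul_eq_mul] using sub_toIcoDiv_zsmul_mem_Ico hp c x
  have hvanish : ∀ k ∉ ({m - 1, m} : Finset ℤ), f (x - p * k) = 0 := fun k hk => by
    by_contra h
    exact hk (by simpa using setOf_translate_ne_zero_subset_pair hp hsupp x h)
  rw [tsum_eq_sum hvanish, Finset.sum_pair (by omega), add_comm]
  convert hpair _ hy using 3 <;> push_cast <;> ring

end IntegerTranslates

section FlatTop

variable {δ : ℝ} {phiL phiR psi : ℝ → ℝ}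

lemma flatTop_eq_zero_of_notMem_Ioo (hδ : 0 < δ)
    (hL : ∀ x : ℝ, phiL x = (1 + x) ^ 2 * (1 - 2 * x))
    (hR : ∀ x : ℝ, phiR x = (1 - x) ^ 2 * (1 + 2 * x))
    (hpsi1 : ∀ x ∈ Icc (-1 - δ) (-1 + δ), psi x = phiL ((x + 1 - δ) / (2 * δ)))
    (hpsi3 : ∀ x ∈ Icc (1 - δ) (1 + δ), psi x = phiR ((x - 1 + δ) / (2 * δ)))
    (hpsi4 : ∀ x : ℝ, x ∉ Icc (-1 - δ) (1 + δ) → psi x = 0)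
    {y : ℝ} (hy : y ∉ Ioo (-1 - δ) (1 + δ)) : psi y = 0 := by
  by_cases hIcc : y ∈ Icc (-1 - δ) (1 + δ)
  · rcases (not_and_or.mp hy).imp hIcc.1.eq_of_not_lt' hIcc.2.eq_of_not_lt with rfl | rfl
    · rw [hpsi1 _ ⟨le_rfl, by linarith⟩, hL]
      field_simp
      ring
    · rw [hpsi3 _ ⟨by linarith, le_rfl⟩, hR]
      field_simp
      ring
  · exact hpsi4 y hIcc

lemma flatTop_add_flatTop_add_two (hδ : 0 < δ)
    (hL : ∀ x : ℝ, phiL x = (1 + x) ^ 2 * (1 - 2 * x))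
    (hR : ∀ x : ℝ, phiR x = (1 - x) ^ 2 * (1 + 2 * x))
    (hpsi1 : ∀ x ∈ Icc (-1 - δ) (-1 + δ), psi x = phiL ((x + 1 - δ) / (2 * δ)))
    (hpsi2 : ∀ x ∈ Icc (-1 + δ) (1 - δ), psi x = 1)
    (hpsi3 : ∀ x ∈ Icc (1 - δ) (1 + δ), psi x = phiR ((x - 1 + δ) / (2 * δ)))
    (hpsi4 : ∀ x : ℝ, x ∉ Icc (-1 - δ) (1 + δ) → psi x = 0)
    {y : ℝ} (hy : y ∈ Ico (-1 - δ) (1 - δ)) : psi y + psi (y + 2) = 1 := by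
  by_cases hflat : -1 + δ ≤ y
  · have hfar : y + 2 ∉ Ioo (-1 - δ) (1 + δ) := fun h => by linarith [h.2]
    rw [hpsi2 y ⟨hflat, hy.2.le⟩, flatTop_eq_zero_of_notMem_Ioo hδ hL hR hpsi1 hpsi3 hpsi4 hfar,
      add_zero]
  · rw [hpsi1 y ⟨hy.1, by linarith⟩, hpsi3 (y + 2) ⟨by linarith [hy.1], by linarith⟩, hL, hR]
    field_simp
    ring

end FlatTop

/-- The integer translates x ↦ ψ_δ(x - 2k), k ∈ ℤ, of the flat-top function form a
    partition of unity on ℝ: their sum is 1, with at most two nonzero terms. -/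
theorem stmt_4 (δ : ℝ) (hδ : 0 < δ) (hδ1 : δ < 1)
    (phiL phiR psi : ℝ → ℝ)
    (hL : ∀ x : ℝ, phiL x = (1 + x) ^ 2 * (1 - 2 * x))
    (hR : ∀ x : ℝ, phiR x = (1 - x) ^ 2 * (1 + 2 * x))
    (hpsi1 : ∀ x ∈ Icc (-1 - δ) (-1 + δ), psi x = phiL ((x + 1 - δ) / (2 * δ)))
    (hpsi2 : ∀ x ∈ Icc (-1 + δ) (1 - δ), psi x = 1)
    (hpsi3 : ∀ x ∈ Icc (1 - δ) (1 + δ), psi x = phiR ((x - 1 + δ) / (2 * δ)))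
    (hpsi4 : ∀ x : ℝ, x ∉ Icc (-1 - δ) (1 + δ) → psi x = 0) :
    ∀ x : ℝ, (∑' k : ℤ, psi (x - 2 * k) = 1) ∧
      {k : ℤ | psi (x - 2 * k) ≠ 0}.Finite ∧
      {k : ℤ | psi (x - 2 * k) ≠ 0}.ncard ≤ 2 := by
  have hsupp : ∀ y ∉ Ioo (-1 - δ) (-1 - δ + 2 * 2), psi y = 0 := fun y hy =>
    flatTop_eq_zero_of_notMem_Ioo hδ hL hR hpsi1 hpsi3 hpsi4 fun h => hy ⟨h.1, by linarith [h.2]⟩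
  have hpair : ∀ y ∈ Ico (-1 - δ) (-1 - δ + 2), psi y + psi (y + 2) = 1 := fun y hy =>
    flatTop_add_flatTop_add_two hδ hL hR hpsi1 hpsi2 hpsi3 hpsi4 ⟨hy.1, by linarith [hy.2]⟩
  intro x
  have hsub := setOf_translate_ne_zero_subset_pair two_pos hsupp x
  refine ⟨tsum_translate_eq_one two_pos hsupp hpair x, (toFinite _).subset hsub, ?_⟩
  calc {k : ℤ | psi (x - 2 * k) ≠ 0}.ncard
      ≤ ({toIcoDiv two_pos (-1 - δ) x - 1, toIcoDiv two_pos (-1 - δ) x} : Set ℤ).ncard :=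
        ncard_le_ncard hsub (toFinite _)
    _ = 2 := ncard_pair (by omega)
end

section
/- Let H be a real Hilbert space, a : H × H → ℝ a continuous symmetric bilinear form that is coercive on a closed subspace V, K ⊆ H a nonempty closed convex set with K - K ⊆ V, and f ∈ H*. Then the functional G(v) = (1/2)a(v,v) - f(v) attains a unique minimum over K. -/
/-!
A minimizing sequence of a strongly convex function on a closed convex set is Cauchy: by strong
convexity, two points whose values are within `ε` of the infimum have a midpoint whose value is
below that infimum unless they are `O(√ε)` apart. Its limit is a minimizer by lower
semicontinuity, and strict convexity makes it unique. The energy `½ a(v,v) - f(v)` is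
`c`-strongly convex on `K` because `K - K` lies in the subspace where `a` is `c`-coercive, and it
is bounded below on `K` because along `K` it grows quadratically around any fixed point of `K`.
-/

open Filter Set

lemma LowerSemicontinuousOn.isClosed_inter_preimage_Iic {α γ : Type*} [TopologicalSpace α]
    [LinearOrder γ] {f : α → γ} {s : Set α} (hf : LowerSemicontinuousOn f s) (hs : IsClosed s)
    (y : γ) : IsClosed (s ∩ f ⁻¹' Iic y) := by
  obtain ⟨v, hv, hsv⟩ := lowerSemicontinuousOn_iff_preimage_Iic.1 hf y
  exact hsv ▸ hs.inter hv

section StrongConvexity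

variable {E : Type*} [NormedAddCommGroup E] [NormedSpace ℝ E] {s : Set E} {f : E → ℝ}
  {m t ε : ℝ} {x y : E}

lemma StrongConvexOn.norm_sub_sq_le (hf : StrongConvexOn s m f) (hm : 0 < m)
    (ht : ∀ z ∈ s, t ≤ f z) (hx : x ∈ s) (hy : y ∈ s) (hfx : f x ≤ t + ε)
    (hfy : f y ≤ t + ε) : ‖x - y‖ ^ 2 ≤ 8 * ε / m := by
  have h₀ : (0 : ℝ) ≤ 1 / 2 := by norm_num
  have h₁ : (1 / 2 : ℝ) + 1 / 2 = 1 := by norm_num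
  have hmid := hf.2 hx hy h₀ h₀ h₁
  have hlow := ht _ (hf.1 hx hy h₀ h₀ h₁)
  rw [le_div_iff₀ hm]
  simp only [smul_eq_mul] at hmid
  linarith

lemma StrongConvexOn.exists_isMinOn [CompleteSpace E] (hf : StrongConvexOn s m f) (hm : 0 < m)
    (hs : IsClosed s) (hne : s.Nonempty) (hlsc : LowerSemicontinuousOn f s)
    (hbdd : BddBelow (f '' s)) : ∃ x ∈ s, IsMinOn f s x := by
  set t := sInf (f '' s)
  have ht : ∀ z ∈ s, t ≤ f z := fun z hz => csInf_le hbdd (mem_image_of_mem f hz)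
  have hseq : ∀ n : ℕ, ∃ x ∈ s, f x ≤ t + 1 / (n + 1) := fun n => by
    obtain ⟨_, ⟨x, hx, rfl⟩, hlt⟩ :=
      Real.lt_sInf_add_pos (hne.image f) (Nat.one_div_pos_of_nat (n := n))
    exact ⟨x, hx, hlt.le⟩
  choose u hus hfu using hseq
  have hfu_le : ∀ N n : ℕ, N ≤ n → f (u n) ≤ t + 1 / (N + 1) := fun N n hNn =>
    (hfu n).trans (by gcongr)
  have hcauchy : CauchySeq u := by
    refine cauchySeq_of_le_tendsto_0 (fun N : ℕ => √(8 * (1 / (N + 1)) / m))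
      (fun n k N hn hk => ?_) ?_
    · rw [dist_eq_norm]
      exact Real.le_sqrt_of_sq_le
        (hf.norm_sub_sq_le hm ht (hus n) (hus k) (hfu_le N n hn) (hfu_le N k hk))
    · simpa using ((tendsto_one_div_add_atTop_nhds_zero_nat.const_mul 8).div_const m).sqrt
  obtain ⟨z, hz⟩ := cauchySeq_tendsto_of_complete hcauchy
  have hzs : z ∈ s := hs.mem_of_tendsto hz (Eventually.of_forall hus)
  have hfz : ∀ N : ℕ, f z ≤ t + 1 / (N + 1) := fun N =>
    ((hlsc.isClosed_inter_preimage_Iic hs _).mem_of_tendsto hz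
      (eventually_atTop.2 ⟨N, fun n hn => ⟨hus n, hfu_le N n hn⟩⟩)).2
  have hfzt : f z ≤ t := by
    simpa using ge_of_tendsto' (tendsto_one_div_add_atTop_nhds_zero_nat.const_add t) hfz
  exact ⟨z, hzs, fun w hw => hfzt.trans (ht w hw)⟩

end StrongConvexity

section Energy

variable {E : Type*} [NormedAddCommGroup E] [NormedSpace ℝ E] (a : E →ₗ[ℝ] E →ₗ[ℝ] ℝ)
  (f : E →L[ℝ] ℝ) {K : Set E} {c : ℝ}

noncomputable def energy (v : E) : ℝ := 1 / 2 * a v v - f v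

lemma energy_smul_add_smul {α β : ℝ} (hαβ : α + β = 1) (x y : E) :
    energy a f (α • x + β • y) =
      α * energy a f x + β * energy a f y - α * β / 2 * a (x - y) (x - y) := by
  obtain rfl : β = 1 - α := by linarith
  simp only [energy, map_add, map_sub, map_smul, LinearMap.add_apply, LinearMap.sub_apply,
    LinearMap.smul_apply, smul_eq_mul]
  ring

lemma energy_add (u d : E) :
    energy a f (u + d) = energy a f u + (a u d + a d u) / 2 + 1 / 2 * a d d - f d := by
  simp only [energy, map_add, LinearMap.add_apply]
  ring

lemma strongConvexOn_energy (hK : Convex ℝ K)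
    (hcoer : ∀ v ∈ K, ∀ w ∈ K, c * ‖v - w‖ ^ 2 ≤ a (v - w) (v - w)) :
    StrongConvexOn K c (energy a f) := by
  refine ⟨hK, fun x hx y hy α β hα hβ hαβ => ?_⟩
  rw [energy_smul_add_smul a f hαβ]
  have hαβ₀ : 0 ≤ α * β := mul_nonneg hα hβ
  have := hcoer x hx y hy
  simp only [smul_eq_mul]
  nlinarith

lemma continuous_energy {C : ℝ} (hbdd : ∀ v w, |a v w| ≤ C * ‖v‖ * ‖w‖) :
    Continuous (energy a f) := by
  have hdiag : Continuous fun v => a v v := by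
    have hA := (a.mkContinuous₂ C fun v w => (Real.norm_eq_abs _).trans_le (hbdd v w)).continuous₂
    exact hA.comp (continuous_id.prodMk continuous_id)
  exact (continuous_const.mul hdiag).sub f.continuous

lemma bddBelow_energy_image {C : ℝ} (hbdd : ∀ v w, |a v w| ≤ C * ‖v‖ * ‖w‖) (hc : 0 < c)
    (hcoer : ∀ v ∈ K, ∀ w ∈ K, c * ‖v - w‖ ^ 2 ≤ a (v - w) (v - w)) (hK : K.Nonempty) :
    BddBelow (energy a f '' K) := by
  obtain ⟨u, hu⟩ := hK
  set B := C * ‖u‖ + ‖f‖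
  refine ⟨energy a f u - B ^ 2 / (2 * c), forall_mem_image.2 fun w hw => ?_⟩
  obtain ⟨d, rfl⟩ : ∃ d, w = u + d := ⟨w - u, by abel⟩
  have hdd : c * ‖d‖ ^ 2 ≤ a d d := by simpa using hcoer _ hw u hu
  have hud := neg_le_of_abs_le (hbdd u d)
  have hdu := neg_le_of_abs_le (hbdd d u)
  have hfd : f d ≤ ‖f‖ * ‖d‖ := (le_abs_self _).trans (f.le_opNorm d)
  have hquad : B * ‖d‖ ≤ c / 2 * ‖d‖ ^ 2 + B ^ 2 / (2 * c) := by
    have : B ^ 2 / (2 * c) * (2 * c) = B ^ 2 := div_mul_cancel₀ _ (by positivity)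
    nlinarith [sq_nonneg (c * ‖d‖ - B)]
  rw [energy_add]
  nlinarith

end Energy

theorem stmt_5_general {H : Type*} [NormedAddCommGroup H] [InnerProductSpace ℝ H]
    [CompleteSpace H]
    (a : H →ₗ[ℝ] H →ₗ[ℝ] ℝ) (Cb : ℝ)
    (hbdd : ∀ v w : H, |a v w| ≤ Cb * ‖v‖ * ‖w‖)
    (V : Submodule ℝ H)
    (c : ℝ) (hc : 0 < c) (hcoer : ∀ v ∈ V, c * ‖v‖ ^ 2 ≤ a v v)
    (K : Set H) (hKne : K.Nonempty) (hKcl : IsClosed K) (hKcv : Convex ℝ K)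
    (hKV : ∀ v ∈ K, ∀ w ∈ K, v - w ∈ V)
    (f : H →L[ℝ] ℝ) :
    ∃! u, u ∈ K ∧ ∀ v ∈ K,
      (1 / 2) * a u u - f u ≤ (1 / 2) * a v v - f v := by
  have hcoerK : ∀ v ∈ K, ∀ w ∈ K, c * ‖v - w‖ ^ 2 ≤ a (v - w) (v - w) :=
    fun v hv w hw => hcoer _ (hKV v hv w hw)
  have hG := strongConvexOn_energy a f hKcv hcoerK
  obtain ⟨u, huK, hu⟩ := hG.exists_isMinOn hc hKcl hKne
    ((continuous_energy a f hbdd).lowerSemicontinuous.lowerSemicontinuousOn K)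
    (bddBelow_energy_image a f hbdd hc hcoerK hKne)
  exact ⟨u, ⟨huK, isMinOn_iff.1 hu⟩, fun v ⟨hvK, hv⟩ =>
    (hG.strictConvexOn hc).eq_of_isMinOn (isMinOn_iff.2 hv) hu hvK huK⟩

/-- Existence and uniqueness of the minimizer of G(v) = ½a(v,v) - f(v) over a nonempty
    closed convex set K, for a continuous symmetric bilinear form a coercive on a
    closed subspace V with K - K ⊆ V. -/
theorem stmt_5 {H : Type*} [NormedAddCommGroup H] [InnerProductSpace ℝ H]
    [CompleteSpace H]
    (a : H →ₗ[ℝ] H →ₗ[ℝ] ℝ) (Cb : ℝ)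
    (hbdd : ∀ v w : H, |a v w| ≤ Cb * ‖v‖ * ‖w‖)
    (hsymm : ∀ v w : H, a v w = a w v)
    (V : Submodule ℝ H) (hV : IsClosed (V : Set H))
    (c : ℝ) (hc : 0 < c) (hcoer : ∀ v ∈ V, c * ‖v‖ ^ 2 ≤ a v v)
    (K : Set H) (hKne : K.Nonempty) (hKcl : IsClosed K) (hKcv : Convex ℝ K)
    (hKV : ∀ v ∈ K, ∀ w ∈ K, v - w ∈ V)
    (f : H →L[ℝ] ℝ) :
    ∃! u, u ∈ K ∧ ∀ v ∈ K,
      (1 / 2) * a u u - f u ≤ (1 / 2) * a v v - f v :=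
  stmt_5_general a Cb hbdd V c hc hcoer K hKne hKcl hKcv hKV f
end

section
/- Let u solve the variational inequality a(u, v-u) ≥ (f, v-u) for all v ∈ K, and let u_h solve the discrete inequality a(u_h, v - u_h) ≥ (f, v - u_h) for all v ∈ K_h, where a is a symmetric bilinear form and |·| denotes the seminorm induced by a. Then for any w ∈ K_h, |w - u_h|² ≤ |w - u|² + 2[a(u, w - u_h) - (f, w - u_h)]. -/
/-! Testing the discrete inequality with `v = w` bounds the right-hand side below by
`|w - u|² + 2 a(u - u_h, w - u_h)`, and the claim then reduces to `|u - u_h|² ≥ 0`. -/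

namespace LinearMap

variable {R E : Type*} [CommRing R] [AddCommGroup E] [Module R E] (a : E →ₗ[R] E →ₗ[R] R)

theorem apply_sub_sub_self_of_symm (hsymm : ∀ v w : E, a v w = a w v) (p q : E) :
    a (p - q) (p - q) = a p p - 2 * a p q + a q q := by
  simp only [map_sub, sub_apply, hsymm q p]
  ring

theorem apply_self_sub_apply_self_le_two_mul [LinearOrder R] [IsStrictOrderedRing R]
    (hsymm : ∀ v w : E, a v w = a w v) (hpsd : ∀ v : E, 0 ≤ a v v) (p q : E) :
    a p p - a q q ≤ 2 * a (p - q) p := by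
  have hexpand := a.apply_sub_sub_self_of_symm hsymm p q
  have hnonneg := hpsd (p - q)
  rw [map_sub, sub_apply, hsymm q p]
  linarith

end LinearMap

theorem stmt_8_general {E : Type*} [AddCommGroup E] [Module ℝ E]
    (a : E →ₗ[ℝ] E →ₗ[ℝ] ℝ)
    (hsymm : ∀ v w : E, a v w = a w v)
    (hpsd : ∀ v : E, 0 ≤ a v v)
    (f : E →ₗ[ℝ] ℝ)
    (Kh : Set E)
    (u uh : E)
    (hVIh : ∀ v ∈ Kh, f (v - uh) ≤ a uh (v - uh)) :
    ∀ w ∈ Kh,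
      a (w - uh) (w - uh) ≤
        a (w - u) (w - u) + 2 * (a u (w - uh) - f (w - uh)) := by
  intro w hw
  have hdiscrete := hVIh w hw
  have hexpand := a.apply_self_sub_apply_self_le_two_mul hsymm hpsd (w - uh) (w - u)
  rw [sub_sub_sub_cancel_left, map_sub a u uh, LinearMap.sub_apply] at hexpand
  linarith

/-- Preliminary estimate: if u solves the VI over K and u_h the discrete VI over K_h,
    then for any w ∈ K_h,
    |w - u_h|² ≤ |w - u|² + 2[a(u, w - u_h) - (f, w - u_h)],
    where |v|² = a(v,v). -/
theorem stmt_8 {E : Type*} [AddCommGroup E] [Module ℝ E]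
    (a : E →ₗ[ℝ] E →ₗ[ℝ] ℝ)
    (hsymm : ∀ v w : E, a v w = a w v)
    (hpsd : ∀ v : E, 0 ≤ a v v)
    (f : E →ₗ[ℝ] ℝ)
    (K Kh : Set E) (hKcv : Convex ℝ K) (hKhcv : Convex ℝ Kh)
    (u uh : E) (hu : u ∈ K) (huh : uh ∈ Kh)
    (hVI : ∀ v ∈ K, f (v - u) ≤ a u (v - u))
    (hVIh : ∀ v ∈ Kh, f (v - uh) ≤ a uh (v - uh)) :
    ∀ w ∈ Kh,
      a (w - uh) (w - uh) ≤
        a (w - u) (w - u) + 2 * (a u (w - uh) - f (w - uh)) :=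
  stmt_8_general a hsymm hpsd f Kh u uh hVIh
end
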